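/- arXiv:2205.06394 — 12 statements merged into one kernel-verified Lean document; each statement's English description precedes it below -/
import Mathlib

section
/- For real numbers k ≥ 1, t ≥ k, and 0 ≤ x ≤ 1/2, we have (1+t)^x ≥ (1/2)^x + ((1+k)^x - (1/2)^x)/k^x · t^x. -/
/-!
Dividing by `t ^ x` and substituting `u = 1 / t`, the claim says that
`h u = (1 + u) ^ x - (u / 2) ^ x` satisfies `h (1 / t) ≥ h (1 / k)`, so it suffices that `h` is
antitone on `[0, 1]`. Since `1 + u ≥ 2 u` there and `x - 1 ≤ -1/2`, we get
`(1 + u) ^ (x - 1) ≤ 4 ^ (x - 1) (u / 2) ^ (x - 1) ≤ (u / 2) ^ (x - 1) / 2`, which is `h' ≤ 0`.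
-/

open Real

lemma four_rpow_sub_one_le_half {x : ℝ} (hx : x ≤ 1 / 2) : (4 : ℝ) ^ (x - 1) ≤ 1 / 2 := by
  calc (4 : ℝ) ^ (x - 1) ≤ 4 ^ (-(1 / 2) : ℝ) :=
        rpow_le_rpow_of_exponent_le (by norm_num) (by linarith)
    _ = 1 / 2 := by
      rw [rpow_neg (by norm_num), show (4 : ℝ) = 2 ^ (2 : ℝ) by norm_num,
        ← rpow_mul (by norm_num)]
      norm_num

lemma one_add_rpow_sub_one_le_half_rpow_sub_one {x u : ℝ} (hx : x ≤ 1 / 2) (hu0 : 0 < u)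
    (hu1 : u ≤ 1) :
    (1 + u) ^ (x - 1) ≤ (u / 2) ^ (x - 1) / 2 := by
  calc (1 + u) ^ (x - 1) ≤ (4 * (u / 2)) ^ (x - 1) :=
        rpow_le_rpow_of_nonpos (by positivity) (by linarith) (by linarith)
    _ = 4 ^ (x - 1) * (u / 2) ^ (x - 1) := mul_rpow (by norm_num) (by positivity)
    _ ≤ 1 / 2 * (u / 2) ^ (x - 1) := by gcongr; exact four_rpow_sub_one_le_half hx
    _ = (u / 2) ^ (x - 1) / 2 := by ring

lemma hasDerivAt_one_add_rpow_sub_half_rpow {x u : ℝ} (hu : 0 < u) :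
    HasDerivAt (fun v : ℝ => (1 + v) ^ x - (v / 2) ^ x)
      (x * (1 + u) ^ (x - 1) - x * (u / 2) ^ (x - 1) / 2) u := by
  have h₁ := ((hasDerivAt_id u).const_add 1).rpow_const (p := x) (Or.inl (by simp; linarith))
  have h₂ := ((hasDerivAt_id u).div_const 2).rpow_const (p := x) (Or.inl (by simp; linarith))
  exact (h₁.sub h₂).congr_deriv (by simp only [id]; ring)

lemma antitoneOn_one_add_rpow_sub_half_rpow {x : ℝ} (hx0 : 0 ≤ x) (hx : x ≤ 1 / 2) :
    AntitoneOn (fun u : ℝ => (1 + u) ^ x - (u / 2) ^ x) (Set.Icc 0 1) := by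
  refine antitoneOn_of_deriv_nonpos (convex_Icc 0 1) ?_ ?_ ?_
  · exact ((continuousOn_const.add continuousOn_id).rpow_const fun _ _ => Or.inr hx0).sub
      ((continuousOn_id.div_const 2).rpow_const fun _ _ => Or.inr hx0)
  · rw [interior_Icc]
    exact fun u hu =>
      (hasDerivAt_one_add_rpow_sub_half_rpow hu.1).differentiableAt.differentiableWithinAt
  · rw [interior_Icc]
    intro u hu
    rw [(hasDerivAt_one_add_rpow_sub_half_rpow hu.1).deriv]
    have := mul_le_mul_of_nonneg_left
      (one_add_rpow_sub_one_le_half_rpow_sub_one hx hu.1 hu.2.le) hx0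
    linarith

lemma one_add_rpow_sub_half_rpow_eq {x s : ℝ} (hs : 0 < s) :
    (1 + s) ^ x - (1 / 2 : ℝ) ^ x = s ^ x * ((1 + 1 / s) ^ x - (1 / s / 2) ^ x) := by
  rw [mul_sub, ← mul_rpow hs.le (by positivity), ← mul_rpow hs.le (by positivity)]
  field_simp
  ring_nf

theorem lemma1_part1 (k t x : ℝ) (hk : 1 ≤ k) (ht : k ≤ t)
    (hx0 : 0 ≤ x) (hx : x ≤ 1 / 2) :
    (1 + t) ^ x ≥ (1 / 2 : ℝ) ^ x + ((1 + k) ^ x - (1 / 2 : ℝ) ^ x) / k ^ x * t ^ x := by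
  have hk0 : 0 < k := by linarith
  have ht0 : 0 < t := by linarith
  have hmono := antitoneOn_one_add_rpow_sub_half_rpow hx0 hx
    ⟨by positivity, div_le_one_of_le₀ (hk.trans ht) ht0.le⟩
    ⟨by positivity, div_le_one_of_le₀ hk hk0.le⟩
    (one_div_le_one_div_of_le hk0 ht)
  rw [ge_iff_le, ← le_sub_iff_add_le', one_add_rpow_sub_half_rpow_eq hk0,
    one_add_rpow_sub_half_rpow_eq ht0, mul_div_cancel_left₀ _ (rpow_pos_of_pos hk0 x).ne',
    mul_comm]
  exact mul_le_mul_of_nonneg_left hmono (rpow_nonneg ht0.le x)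
end

section
/- For real numbers k ≥ 1, t ≥ k, and x ≥ 1, we have (1+t)^x ≤ (1/2)^x + ((1+k)^x - (1/2)^x)/k^x · t^x. -/
/-!
Convexity of `f y = y ^ x` means its increments over a step `d` grow with the base point:
`f a + f (b + d) ≤ f b + f (a + d)` for `b ≤ a`. Taking `b = k`, `a = t`, `d = k t` gives
`t ^ x + (k (1 + t)) ^ x ≤ k ^ x + (t (1 + k)) ^ x`, i.e. the bound with `1` in place of `(1/2) ^ x`;
lowering the constant to `(1/2) ^ x ≤ 1` only helps because `t ^ x ≥ k ^ x`.
-/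

theorem ConvexOn.add_le_add_of_le {𝕜 : Type*} [Field 𝕜] [LinearOrder 𝕜] [IsStrictOrderedRing 𝕜]
    {s : Set 𝕜} {f : 𝕜 → 𝕜} (hf : ConvexOn 𝕜 s f) {a b d : 𝕜} (hb : b ∈ s) (had : a + d ∈ s)
    (hba : b ≤ a) (hd : 0 ≤ d) : f a + f (b + d) ≤ f b + f (a + d) := by
  rcases hd.eq_or_lt with rfl | hd
  · simp only [add_zero, add_comm, le_refl]
  rcases hba.eq_or_lt with rfl | hba
  · exact le_rfl
  have ha := hf.secant_mono_aux1 hb had hba (by linarith)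
  have hbd := hf.secant_mono_aux1 hb had (show b < b + d by linarith) (by linarith)
  have hw : 0 < a + d - b := by linarith
  refine le_of_mul_le_mul_left ?_ hw
  linear_combination ha + hbd

theorem mul_one_add_rpow_le {k t x : ℝ} (hk : 0 ≤ k) (ht : k ≤ t) (hx : 1 ≤ x) :
    k ^ x * (1 + t) ^ x ≤ k ^ x + ((1 + k) ^ x - 1) * t ^ x := by
  have hshift := (convexOn_rpow hx).add_le_add_of_le (a := t) (b := k) (d := k * t)
    (Set.mem_Ici.2 hk) (Set.mem_Ici.2 (by nlinarith)) ht (by nlinarith)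
  have hl : (k + k * t) ^ x = k ^ x * (1 + t) ^ x := by
    rw [← Real.mul_rpow hk (by linarith)]; ring_nf
  have hr : (t + k * t) ^ x = t ^ x * (1 + k) ^ x := by
    rw [← Real.mul_rpow (by linarith) (by linarith)]; ring_nf
  rw [hl, hr] at hshift
  linarith

theorem lemma1_part2 (k t x : ℝ) (hk : 1 ≤ k) (ht : k ≤ t) (hx : 1 ≤ x) :
    (1 + t) ^ x ≤ (1 / 2 : ℝ) ^ x + ((1 + k) ^ x - (1 / 2 : ℝ) ^ x) / k ^ x * t ^ x := by
  have hkx : 0 < k ^ x := by positivity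
  have hkt : k ^ x ≤ t ^ x := Real.rpow_le_rpow (by linarith) ht (by linarith)
  have hhalf : (1 / 2 : ℝ) ^ x ≤ 1 := Real.rpow_le_one (by norm_num) (by norm_num) (by linarith)
  have hbound := mul_one_add_rpow_le (by linarith) ht hx
  rw [div_mul_eq_mul_div, ← sub_le_iff_le_add', le_div_iff₀ hkx]
  linear_combination hbound + mul_nonneg (sub_nonneg.2 hhalf) (sub_nonneg.2 hkt)
end

section
/- Let f : [0,1] → ℝ≥0 be a monotonically increasing function satisfying the superadditivity property f(x² + y²)^r ≥ f(x²)^r + f(y²)^r for some fixed r ≥ √2 whenever x² + y² ≤ 1. If f(y²)^r ≥ k·f(x²)^r for some real k ≥ 1, then for all α with 0 ≤ α ≤ r/2, f(x² + y²)^α ≥ (1/2)^(α/r) f(x²)^α + ((1+k)^(α/r) - (1/2)^(α/r))/k^(α/r) · f(y²)^α. -/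
/-! Put `a = f(x²)^r`, `b = f(y²)^r` and `s = α / r ≤ 1/2`. Superadditivity gives
`f(x² + y²)^α ≥ (a + b)^s`, so it suffices to show the homogeneous inequality
`(1/2)^s a^s + ((1+k)^s - (1/2)^s) / k^s · b^s ≤ (a + b)^s` for `b ≥ k a`. Scaling by `t = b / (k a) ≥ 1`
reduces it to `(1/2)^s + c t^s ≤ (1 + k t)^s` with `c = (1+k)^s - (1/2)^s`, which holds with
equality at `t = 1`; the difference of the two sides is nondecreasing on `[1, ∞)` because
`c ≤ k (1+k)^(s-1)`, and this last bound is `(1+k)^(s-1) ≤ 2^(s-1) ≤ 2^(-s)`, where `s ≤ 1/2` is used. -/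

open Real Set

lemma one_add_rpow_sub_half_rpow_le {s k : ℝ} (hs : s ≤ 1 / 2) (hk : 1 ≤ k) :
    (1 + k) ^ s - (1 / 2 : ℝ) ^ s ≤ k * (1 + k) ^ (s - 1) := by
  have h_split : (1 + k) ^ s = (1 + k) * (1 + k) ^ (s - 1) := by
    rw [rpow_sub_one (by positivity)]
    field_simp
  have h_half : (1 + k) ^ (s - 1) ≤ (1 / 2 : ℝ) ^ s :=
    calc (1 + k) ^ (s - 1) ≤ (2 : ℝ) ^ (s - 1) :=
          rpow_le_rpow_of_nonpos two_pos (by linarith) (by linarith)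
      _ ≤ (2 : ℝ) ^ (-s) := rpow_le_rpow_of_exponent_le one_le_two (by linarith)
      _ = (1 / 2 : ℝ) ^ s := by rw [rpow_neg zero_le_two, ← inv_rpow zero_le_two, one_div]
  rw [h_split]
  linarith

lemma monotoneOn_one_add_mul_rpow_sub_mul_rpow {s k c : ℝ} (hs0 : 0 ≤ s) (hs1 : s ≤ 1)
    (hk : 0 < k) (hc : c ≤ k * (1 + k) ^ (s - 1)) :
    MonotoneOn (fun t : ℝ => (1 + k * t) ^ s - c * t ^ s) (Ici 1) := by
  have h_deriv : ∀ t : ℝ, 1 ≤ t → HasDerivAt (fun t : ℝ => (1 + k * t) ^ s - c * t ^ s)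
      (k * s * (1 + k * t) ^ (s - 1) - c * (s * t ^ (s - 1))) t := by
    intro t ht
    have h_lin : HasDerivAt (fun t : ℝ => 1 + k * t) k t := by
      simpa using ((hasDerivAt_id t).const_mul k).const_add 1
    exact (h_lin.rpow_const (Or.inl (by nlinarith))).sub
      ((hasDerivAt_rpow_const (Or.inl (by positivity))).const_mul c)
  refine monotoneOn_of_hasDerivWithinAt_nonneg (convex_Ici 1)
    (HasDerivAt.continuousOn fun t ht => h_deriv t ht)
    (fun t ht => (h_deriv t (interior_subset ht)).hasDerivWithinAt) fun t ht => ?_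
  rw [interior_Ici, mem_Ioi] at ht
  have ht0 : 0 < t := zero_lt_one.trans ht
  have h_ratio : c * t ^ (s - 1) ≤ k * (1 + k * t) ^ (s - 1) :=
    calc c * t ^ (s - 1) ≤ k * (1 + k) ^ (s - 1) * t ^ (s - 1) := by gcongr
      _ = k * ((1 + k) * t) ^ (s - 1) := by rw [mul_rpow (by positivity) ht0.le]; ring
      _ ≤ k * (1 + k * t) ^ (s - 1) := mul_le_mul_of_nonneg_left
          (rpow_le_rpow_of_nonpos (by nlinarith) (by nlinarith) (sub_nonpos.2 hs1)) hk.le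
  linarith [mul_nonneg hs0 (sub_nonneg.2 h_ratio)]

lemma half_rpow_add_mul_rpow_le_one_add_mul_rpow {s k t : ℝ} (hs0 : 0 ≤ s) (hs : s ≤ 1 / 2)
    (hk : 1 ≤ k) (ht : 1 ≤ t) :
    (1 / 2 : ℝ) ^ s + ((1 + k) ^ s - (1 / 2 : ℝ) ^ s) * t ^ s ≤ (1 + k * t) ^ s := by
  have h_mono := monotoneOn_one_add_mul_rpow_sub_mul_rpow hs0 (by linarith) (by linarith)
    (one_add_rpow_sub_half_rpow_le hs hk)
  have h := h_mono (mem_Ici.2 le_rfl) (mem_Ici.2 ht) ht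
  simp only [mul_one, one_rpow] at h
  linarith

lemma half_rpow_mul_rpow_add_le_add_rpow {s k a b : ℝ} (hs0 : 0 ≤ s) (hs : s ≤ 1 / 2)
    (hk : 1 ≤ k) (ha : 0 < a) (hab : k * a ≤ b) :
    (1 / 2 : ℝ) ^ s * a ^ s + ((1 + k) ^ s - (1 / 2 : ℝ) ^ s) / k ^ s * b ^ s ≤ (a + b) ^ s := by
  have hk0 : 0 < k := zero_lt_one.trans_le hk
  set t := b / (k * a) with ht_def
  have ht : 1 ≤ t := (one_le_div (by positivity)).2 hab
  have hb : b = a * (k * t) := by rw [ht_def]; field_simp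
  have h_scale : a ^ s * t ^ s = b ^ s / k ^ s := by
    rw [hb, mul_rpow ha.le (by positivity), mul_rpow hk0.le (by positivity)]
    field_simp
  calc (1 / 2 : ℝ) ^ s * a ^ s + ((1 + k) ^ s - (1 / 2 : ℝ) ^ s) / k ^ s * b ^ s
      = a ^ s * ((1 / 2 : ℝ) ^ s + ((1 + k) ^ s - (1 / 2 : ℝ) ^ s) * t ^ s) := by
        rw [mul_add, mul_left_comm, h_scale]
        ring
    _ ≤ a ^ s * (1 + k * t) ^ s := by
        gcongr
        exact half_rpow_add_mul_rpow_le_one_add_mul_rpow hs0 hs hk ht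
    _ = (a + b) ^ s := by
        rw [← mul_rpow ha.le (by positivity), hb]
        ring_nf

theorem lemma3_general (f : ℝ → ℝ) (r k α x y : ℝ)
    (hf0 : ∀ t, 0 ≤ t → t ≤ 1 → 0 ≤ f t)
    (hr : Real.sqrt 2 ≤ r)
    (hsuper : ∀ u v : ℝ, u ^ 2 + v ^ 2 ≤ 1 →
      f (u ^ 2 + v ^ 2) ^ r ≥ f (u ^ 2) ^ r + f (v ^ 2) ^ r)
    (hxy : x ^ 2 + y ^ 2 ≤ 1)
    (hfx : 0 < f (x ^ 2))
    (hk : 1 ≤ k) (hcond : f (y ^ 2) ^ r ≥ k * f (x ^ 2) ^ r)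
    (hα0 : 0 ≤ α) (hα : α ≤ r / 2) :
    f (x ^ 2 + y ^ 2) ^ α ≥
      (1 / 2 : ℝ) ^ (α / r) * f (x ^ 2) ^ α +
        ((1 + k) ^ (α / r) - (1 / 2 : ℝ) ^ (α / r)) / k ^ (α / r) * f (y ^ 2) ^ α := by
  have hr0 : 0 < r := (sqrt_pos.2 two_pos).trans_le hr
  have hfy : 0 ≤ f (y ^ 2) := hf0 _ (by positivity) (by nlinarith)
  have hfxy : 0 ≤ f (x ^ 2 + y ^ 2) := hf0 _ (by positivity) hxy
  have hs : α / r ≤ 1 / 2 := by rw [div_le_iff₀ hr0]; linarith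
  have hα_eq : α = r * (α / r) := (mul_div_cancel₀ α hr0.ne').symm
  rw [ge_iff_le, hα_eq, rpow_mul hfx.le, rpow_mul hfy, rpow_mul hfxy, ← hα_eq]
  calc _ ≤ (f (x ^ 2) ^ r + f (y ^ 2) ^ r) ^ (α / r) :=
        half_rpow_mul_rpow_add_le_add_rpow (by positivity) hs hk (by positivity) hcond
    _ ≤ (f (x ^ 2 + y ^ 2) ^ r) ^ (α / r) := by
        gcongr
        exact hsuper x y hxy

theorem lemma3 (f : ℝ → ℝ) (r k α x y : ℝ)
    (hf0 : ∀ t, 0 ≤ t → t ≤ 1 → 0 ≤ f t)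
    (hmono : ∀ s t, 0 ≤ s → s ≤ t → t ≤ 1 → f s ≤ f t)
    (hr : Real.sqrt 2 ≤ r)
    (hsuper : ∀ u v : ℝ, u ^ 2 + v ^ 2 ≤ 1 →
      f (u ^ 2 + v ^ 2) ^ r ≥ f (u ^ 2) ^ r + f (v ^ 2) ^ r)
    (hx0 : 0 ≤ x) (hx1 : x ≤ 1) (hy0 : 0 ≤ y) (hy1 : y ≤ 1)
    (hxy : x ^ 2 + y ^ 2 ≤ 1)
    (hfx : 0 < f (x ^ 2))
    (hk : 1 ≤ k) (hcond : f (y ^ 2) ^ r ≥ k * f (x ^ 2) ^ r)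
    (hα0 : 0 ≤ α) (hα : α ≤ r / 2) :
    f (x ^ 2 + y ^ 2) ^ α ≥
      (1 / 2 : ℝ) ^ (α / r) * f (x ^ 2) ^ α +
        ((1 + k) ^ (α / r) - (1 / 2 : ℝ) ^ (α / r)) / k ^ (α / r) * f (y ^ 2) ^ α :=
  lemma3_general f r k α x y hf0 hr hsuper hxy hfx hk hcond hα0 hα
end

section
/- For real numbers k ≥ 1 and 0 ≤ u ≤ 1/2, we have ((1+k)^u - 1)/k^u ≤ (1+k)^u - (1/2)^u)/k^u, and moreover (1/2)^u·a + ((1+k)^u - (1/2)^u)/k^u·b ≥ a + ((1+k)^u - 1)/k^u·b whenever b ≥ k·a ≥ 0; that is, the bound (1/2)^u a + ((1+k)^u-(1/2)^u)/k^u · b is at least a + ((1+k)^u-1)/k^u · b. -/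
/-!
Since `(1/2)^u ≤ 1`, the first inequality is immediate, and the difference of the two sides of the
second is `(1 - (1/2)^u) * (b / k^u - a)`. This is nonnegative because `k^u ≤ k` for `k ≥ 1`,
`u ≤ 1`, so that `k^u * a ≤ k * a ≤ b`.
-/

open Real

lemma le_div_rpow_of_mul_le {k u a b : ℝ} (hk : 1 ≤ k) (hu : u ≤ 1) (ha : 0 ≤ a)
    (hb : k * a ≤ b) : a ≤ b / k ^ u := by
  rw [le_div_iff₀ (rpow_pos_of_pos (zero_lt_one.trans_le hk) u)]
  calc a * k ^ u ≤ a * k := mul_le_mul_of_nonneg_left (rpow_le_self_of_one_le hk hu) ha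
    _ = k * a := mul_comm a k
    _ ≤ b := hb

lemma add_sub_div_mul_le {s c t a b : ℝ} (hs : s ≤ 1) (hab : a ≤ b / t) :
    a + (c - 1) / t * b ≤ s * a + (c - s) / t * b := by
  have hdiff : s * a + (c - s) / t * b - (a + (c - 1) / t * b) = (1 - s) * (b / t - a) := by
    ring
  nlinarith [mul_nonneg (sub_nonneg.2 hs) (sub_nonneg.2 hab)]

theorem tighter_bound (k u a b : ℝ) (hk : 1 ≤ k) (hu0 : 0 ≤ u) (hu : u ≤ 1 / 2)
    (ha : 0 ≤ a) (hb : k * a ≤ b) :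
    ((1 + k) ^ u - 1) / k ^ u ≤ ((1 + k) ^ u - (1 / 2 : ℝ) ^ u) / k ^ u ∧
    (1 / 2 : ℝ) ^ u * a + ((1 + k) ^ u - (1 / 2 : ℝ) ^ u) / k ^ u * b ≥
      a + ((1 + k) ^ u - 1) / k ^ u * b := by
  have hhalf : (1 / 2 : ℝ) ^ u ≤ 1 := rpow_le_one (by norm_num) (by norm_num) hu0
  refine ⟨div_le_div_of_nonneg_right (sub_le_sub_left hhalf _)
    (rpow_nonneg (zero_le_one.trans hk) u), ?_⟩
  exact add_sub_div_mul_le hhalf (le_div_rpow_of_mul_le hk (by linarith) ha hb)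
end

section
/- For real numbers k ≥ 1 and 0 ≤ u ≤ 1, ((1+k)^u - 1)/k^u ≥ 2^u - 1. -/
/-!
Dividing by `k ^ u`, the claim reads `f 2 - f 1 ≤ f (k⁻¹ + 1) - f k⁻¹` for `f x = x ^ u`. Since `f` is
concave on `[0, ∞)`, its increments over steps of length `1` decrease, and `k⁻¹ ≤ 1`.
-/

open Real Set

variable {𝕜 : Type*} [Field 𝕜] [LinearOrder 𝕜] [IsStrictOrderedRing 𝕜] {s : Set 𝕜} {f : 𝕜 → 𝕜}

theorem ConcaveOn.map_add_sub_map_le (hf : ConcaveOn 𝕜 s f) {x y h : 𝕜} (hx : x ∈ s)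
    (hyh : y + h ∈ s) (hxy : x ≤ y) (hh : 0 ≤ h) : f (y + h) - f y ≤ f (x + h) - f x := by
  rcases (show x ≤ y + h by linarith).eq_or_lt with hxyh | hxyh
  · obtain rfl : h = 0 := by linarith
    simp
  -- `x + h` and `y` are the two convex combinations of `x` and `y + h` with swapped weights.
  set d := y + h - x
  have hd : 0 < d := sub_pos.2 hxyh
  have hab : (y - x) / d + h / d = 1 := by field_simp; ring
  have h₁ := hf.2 hx hyh (div_nonneg (sub_nonneg.2 hxy) hd.le) (div_nonneg hh hd.le) hab
  have h₂ := hf.2 hx hyh (div_nonneg hh hd.le) (div_nonneg (sub_nonneg.2 hxy) hd.le)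
    ((add_comm _ _).trans hab)
  simp only [smul_eq_mul] at h₁ h₂
  have e₁ : (y - x) / d * x + h / d * (y + h) = x + h := by field_simp; ring
  have e₂ : h / d * x + (y - x) / d * (y + h) = y := by field_simp; ring
  rw [e₁] at h₁
  rw [e₂] at h₂
  linear_combination h₁ + h₂ - (f x + f (y + h)) * hab

theorem remark3_coeff (k u : ℝ) (hk : 1 ≤ k) (hu0 : 0 ≤ u) (hu : u ≤ 1) :
    ((1 + k) ^ u - 1) / k ^ u ≥ (2 : ℝ) ^ u - 1 := by
  have hk0 : 0 < k := zero_lt_one.trans_le hk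
  have key : (2 : ℝ) ^ u - 1 ≤ (k⁻¹ + 1) ^ u - k⁻¹ ^ u := by
    have := (concaveOn_rpow hu0 hu).map_add_sub_map_le (x := k⁻¹) (y := 1) (h := 1)
      (inv_nonneg.2 hk0.le) (by norm_num) (inv_le_one_of_one_le₀ hk) zero_le_one
    norm_num at this
    linarith
  rw [ge_iff_le, le_div_iff₀ (rpow_pos_of_pos hk0 u)]
  calc (2 ^ u - 1) * k ^ u ≤ ((k⁻¹ + 1) ^ u - k⁻¹ ^ u) * k ^ u := by gcongr
    _ = (1 + k) ^ u - 1 := by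
      rw [sub_mul, ← mul_rpow (by positivity) hk0.le, ← mul_rpow (by positivity) hk0.le,
        add_mul, inv_mul_cancel₀ hk0.ne', one_mul, one_rpow, add_comm]
end

section
/- Suppose a, b, c are nonnegative reals with c^r ≥ a^r + b^r for some r ≥ 1, and b^r ≥ k·a^r for some real k ≥ 1. Then for all α with 0 ≤ α ≤ r/2, c^α ≥ (1/2)^(α/r)·a^α + ((1+k)^(α/r) - (1/2)^(α/r))/k^(α/r)·b^α. -/
/-! With `x = a ^ r`, `y = b ^ r` and `t = α / r ≤ 1 / 2` it suffices to show
`(x + y) ^ t ≥ (1/2) ^ t x ^ t + C y ^ t` whenever `y ≥ k x`, where `C` is the coefficient of `b ^ α`.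
The constant `C` is chosen so that equality holds at `y = k x`, and for `y ≥ k x` the difference
`(x + y) ^ t - C y ^ t` is nondecreasing in `y`: its derivative `t ((x + y) ^ (t - 1) - C y ^ (t - 1))`
is nonnegative because `x + y ≤ (1 + k) / k * y` and `C ≤ ((1 + k) / k) ^ (t - 1)`. -/

open Real Set

noncomputable def monogamyCoeff (k t : ℝ) : ℝ := ((1 + k) ^ t - (1 / 2 : ℝ) ^ t) / k ^ t

lemma monogamyCoeff_le {k t : ℝ} (hk : 1 ≤ k) (ht : t ≤ 1 / 2) :
    monogamyCoeff k t ≤ ((1 + k) / k) ^ (t - 1) := by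
  have hk0 : 0 < k := by linarith
  have hk1 : 0 < 1 + k := by linarith
  rw [monogamyCoeff, div_le_iff₀ (rpow_pos_of_pos hk0 t), div_rpow hk1.le hk0.le,
    div_mul_eq_mul_div, mul_div_assoc, ← rpow_sub hk0, sub_sub_cancel, rpow_one]
  have hsplit : (1 + k) ^ t = (1 + k) ^ (t - 1) * (1 + k) := by
    rw [← rpow_add_one hk1.ne', sub_add_cancel]
  have hsmall : (1 + k) ^ (t - 1) ≤ (1 / 2 : ℝ) ^ t :=
    calc (1 + k) ^ (t - 1) ≤ (2 : ℝ) ^ (t - 1) :=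
          rpow_le_rpow_of_nonpos two_pos (by linarith) (by linarith)
      _ ≤ (2 : ℝ) ^ (-t) := rpow_le_rpow_of_exponent_le one_le_two (by linarith)
      _ = (1 / 2 : ℝ) ^ t := by rw [rpow_neg zero_le_two, one_div, inv_rpow zero_le_two]
  rw [hsplit, mul_one_add]
  linarith

lemma monotoneOn_add_rpow_sub_mul_rpow {x k t C : ℝ} (hx : 0 ≤ x) (hk : 0 < k) (ht0 : 0 ≤ t)
    (ht1 : t ≤ 1) (hC : C ≤ ((1 + k) / k) ^ (t - 1)) :
    MonotoneOn (fun y => (x + y) ^ t - C * y ^ t) (Ici (k * x)) := by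
  refine monotoneOn_of_hasDerivWithinAt_nonneg (convex_Ici _)
    (f' := fun y => t * ((x + y) ^ (t - 1) - C * y ^ (t - 1))) ?_ ?_ ?_
  · exact ((continuous_const.add continuous_id).rpow_const fun _ => Or.inr ht0).sub
      (continuous_const.mul (continuous_id.rpow_const fun _ => Or.inr ht0)) |>.continuousOn
  · rw [interior_Ici]
    intro y hy
    have hy0 : 0 < y := lt_of_le_of_lt (by positivity) hy
    have hxy : HasDerivAt (fun y => (x + y) ^ t) (1 * t * (x + y) ^ (t - 1)) y :=
      ((hasDerivAt_id y).const_add x).rpow_const (Or.inl (by positivity))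
    have hy' : HasDerivAt (fun y => y ^ t) (1 * t * y ^ (t - 1)) y :=
      (hasDerivAt_id y).rpow_const (Or.inl hy0.ne')
    exact ((hxy.sub (hy'.const_mul C)).congr_deriv (by ring)).hasDerivWithinAt
  · rw [interior_Ici]
    intro y (hy : k * x < y)
    have hy0 : 0 < y := lt_of_le_of_lt (by positivity) hy
    have hxy : x + y ≤ (1 + k) / k * y :=
      calc x + y ≤ y / k + y := by linarith [(le_div_iff₀' hk).2 hy.le]
        _ = (1 + k) / k * y := by field_simp
    refine mul_nonneg ht0 (sub_nonneg.2 ?_)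
    calc C * y ^ (t - 1) ≤ ((1 + k) / k) ^ (t - 1) * y ^ (t - 1) :=
          mul_le_mul_of_nonneg_right hC (rpow_nonneg hy0.le _)
      _ = ((1 + k) / k * y) ^ (t - 1) := (mul_rpow (by positivity) hy0.le).symm
      _ ≤ (x + y) ^ (t - 1) := rpow_le_rpow_of_nonpos (by positivity) hxy (by linarith)

lemma le_add_rpow_of_mul_le {x y k t : ℝ} (hx : 0 ≤ x) (hk : 1 ≤ k) (hy : k * x ≤ y)
    (ht0 : 0 ≤ t) (ht : t ≤ 1 / 2) :
    (1 / 2 : ℝ) ^ t * x ^ t + monogamyCoeff k t * y ^ t ≤ (x + y) ^ t := by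
  have hk0 : 0 < k := by linarith
  have hbase : (x + k * x) ^ t - monogamyCoeff k t * (k * x) ^ t = (1 / 2 : ℝ) ^ t * x ^ t := by
    rw [show x + k * x = (1 + k) * x by ring, mul_rpow (by linarith) hx, mul_rpow hk0.le hx,
      monogamyCoeff]
    field_simp
    ring
  have hmono := monotoneOn_add_rpow_sub_mul_rpow hx hk0 ht0 (by linarith) (monogamyCoeff_le hk ht)
    self_mem_Ici hy hy
  simp only [hbase] at hmono
  linarith

theorem monogamy_core (a b c r k α : ℝ) (ha : 0 < a) (hb : 0 ≤ b) (hc : 0 ≤ c)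
    (hr : 1 ≤ r) (hcr : c ^ r ≥ a ^ r + b ^ r)
    (hk : 1 ≤ k) (hba : b ^ r ≥ k * a ^ r)
    (hα0 : 0 ≤ α) (hα : α ≤ r / 2) :
    c ^ α ≥ (1 / 2 : ℝ) ^ (α / r) * a ^ α +
      ((1 + k) ^ (α / r) - (1 / 2 : ℝ) ^ (α / r)) / k ^ (α / r) * b ^ α := by
  have hr0 : 0 < r := by linarith
  have hpow {x : ℝ} (hx : 0 ≤ x) : (x ^ r) ^ (α / r) = x ^ α := by
    rw [← rpow_mul hx, mul_div_cancel₀ _ hr0.ne']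
  have ht : α / r ≤ 1 / 2 := by rw [div_le_iff₀ hr0]; linarith
  rw [ge_iff_le, ← hpow ha.le, ← hpow hb, ← hpow hc]
  calc _ ≤ (a ^ r + b ^ r) ^ (α / r) :=
        le_add_rpow_of_mul_le (by positivity) hk hba (by positivity) ht
    _ ≤ (c ^ r) ^ (α / r) := rpow_le_rpow (by positivity) hcr (by positivity)
end

section
/- For real numbers t ≥ 1 and 0 ≤ x ≤ 1/2, (1+t)^x ≥ (1/2)^x + (2^x - (1/2)^x)·t^x. -/
/-!
With `c = 2 ^ x - (1/2) ^ x`, the function `t ↦ (1 + t) ^ x - c * t ^ x` takes the value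
`(1/2) ^ x` at `t = 1`, so it suffices that it is monotone on `[1, ∞)`. Its derivative is
`x * ((1 + t) ^ (x - 1) - c * t ^ (x - 1))`, which is nonnegative because `1 + t ≤ 2t` and
`x ≤ 1` give `(2t) ^ (x - 1) ≤ (1 + t) ^ (x - 1)`, while `x ≤ 1/2` gives `c ≤ 2 ^ (x - 1)`.
-/

open Real Set

lemma two_rpow_sub_half_rpow_le {x : ℝ} (hx : x ≤ 1 / 2) :
    (2 : ℝ) ^ x - (1 / 2 : ℝ) ^ x ≤ 2 ^ (x - 1) := by
  have hpos : 0 < (2 : ℝ) ^ x := by positivity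
  have hsq : (2 : ℝ) ^ x * 2 ^ x ≤ 2 := by
    rw [← rpow_add two_pos]
    simpa using rpow_le_rpow_of_exponent_le one_le_two (show x + x ≤ 1 by linarith)
  have hhalf : 2 ^ x / 2 ≤ ((2 : ℝ) ^ x)⁻¹ := by
    rw [← one_div, le_div_iff₀ hpos]
    linarith
  rw [one_div, inv_rpow zero_le_two, rpow_sub_one two_ne_zero]
  linarith

lemma monotoneOn_one_add_rpow_sub_mul_rpow {x c : ℝ} (hx₀ : 0 ≤ x) (hx₁ : x ≤ 1)
    (hc : c ≤ 2 ^ (x - 1)) : MonotoneOn (fun t : ℝ => (1 + t) ^ x - c * t ^ x) (Ici 1) := by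
  have hderiv : ∀ t : ℝ, 0 < t → HasDerivAt (fun t : ℝ => (1 + t) ^ x - c * t ^ x)
      (x * ((1 + t) ^ (x - 1) - c * t ^ (x - 1))) t := by
    intro t ht
    refine (((hasDerivAt_id' t).const_add 1).rpow_const (p := x) (Or.inl ?_)).sub
      ((hasDerivAt_rpow_const (p := x) (Or.inl ht.ne')).const_mul c) |>.congr_deriv ?_
    · positivity
    · ring
  have hpos : ∀ t ∈ Ici (1 : ℝ), 0 < t := fun t ht => zero_lt_one.trans_le ht
  refine monotoneOn_of_hasDerivWithinAt_nonneg (convex_Ici 1)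
    (fun t ht => (hderiv t (hpos t ht)).continuousAt.continuousWithinAt)
    (fun t ht => (hderiv t (hpos t (interior_subset ht))).hasDerivWithinAt) fun t ht => ?_
  rw [interior_Ici, mem_Ioi] at ht
  have hpow_le : c * t ^ (x - 1) ≤ (1 + t) ^ (x - 1) :=
    calc c * t ^ (x - 1) ≤ 2 ^ (x - 1) * t ^ (x - 1) := by gcongr
      _ = (2 * t) ^ (x - 1) := (mul_rpow zero_le_two (by linarith)).symm
      _ ≤ (1 + t) ^ (x - 1) := rpow_le_rpow_of_nonpos (by linarith) (by linarith) (by linarith)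
  exact mul_nonneg hx₀ (sub_nonneg.mpr hpow_le)

theorem lemma1_k_one_lower (t x : ℝ) (ht : 1 ≤ t) (hx0 : 0 ≤ x) (hx : x ≤ 1 / 2) :
    (1 + t) ^ x ≥ (1 / 2 : ℝ) ^ x + ((2 : ℝ) ^ x - (1 / 2 : ℝ) ^ x) * t ^ x := by
  have hmono := monotoneOn_one_add_rpow_sub_mul_rpow hx0 (by linarith)
    (two_rpow_sub_half_rpow_le hx)
  have hle := hmono (mem_Ici.mpr le_rfl) (mem_Ici.mpr ht) ht
  simp only [one_add_one_eq_two, one_rpow, mul_one] at hle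
  linarith
end

section
/- For real numbers t ≥ 1 and x ≥ 1, (1+t)^x ≤ (1/2)^x + (2^x - (1/2)^x)·t^x. -/
/-!
With `c = 2^x - (1/2)^x`, the inequality says `g 1 ≤ g t` for `g s = c s^x - (1 + s)^x`, since
`g 1 = -(1/2)^x`. On `s ≥ 1` we have `(1 + s)^(x-1) ≤ (2s)^(x-1) = 2^(x-1) s^(x-1)`, and
`2^(x-1) ≤ c` because `(1/2)^x ≤ 2^(x-1)`; hence `g' s = x (c s^(x-1) - (1 + s)^(x-1)) ≥ 0`.
-/

open Real Set

lemma two_rpow_sub_one_le_two_rpow_sub_half_rpow {x : ℝ} (hx : 1 / 2 ≤ x) :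
    (2 : ℝ) ^ (x - 1) ≤ 2 ^ x - (1 / 2 : ℝ) ^ x := by
  have half_rpow : (1 / 2 : ℝ) ^ x = 2 ^ (-x) := by
    rw [one_div, inv_rpow zero_le_two, rpow_neg zero_le_two]
  have two_rpow : (2 : ℝ) ^ x = 2 ^ (x - 1) * 2 := by
    rw [← rpow_add_one two_ne_zero, sub_add_cancel]
  have : (2 : ℝ) ^ (-x) ≤ 2 ^ (x - 1) := rpow_le_rpow_of_exponent_le one_le_two (by linarith)
  rw [half_rpow, two_rpow]
  linarith

lemma one_add_rpow_le_two_rpow_mul_rpow {s p : ℝ} (hs : 1 ≤ s) (hp : 0 ≤ p) :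
    (1 + s) ^ p ≤ 2 ^ p * s ^ p := by
  rw [← mul_rpow zero_le_two (by linarith)]
  exact rpow_le_rpow (by linarith) (by linarith) hp

lemma hasDerivAt_const_mul_rpow_sub_one_add_rpow (c : ℝ) {x : ℝ} (hx : 1 ≤ x) (s : ℝ) :
    HasDerivAt (fun s => c * s ^ x - (1 + s) ^ x)
      (x * (c * s ^ (x - 1) - (1 + s) ^ (x - 1))) s := by
  have h_rpow := hasDerivAt_rpow_const (x := s) (Or.inr hx)
  have h_one_add := (hasDerivAt_rpow_const (x := 1 + s) (Or.inr hx)).comp s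
    ((hasDerivAt_id s).const_add 1)
  exact ((h_rpow.const_mul c).sub h_one_add).congr_deriv (by ring)

lemma monotoneOn_const_mul_rpow_sub_one_add_rpow {c x : ℝ} (hx : 1 ≤ x)
    (hc : (2 : ℝ) ^ (x - 1) ≤ c) :
    MonotoneOn (fun s => c * s ^ x - (1 + s) ^ x) (Ici 1) := by
  have hderiv := hasDerivAt_const_mul_rpow_sub_one_add_rpow c hx
  refine monotoneOn_of_deriv_nonneg (convex_Ici 1)
    (fun s _ => (hderiv s).continuousAt.continuousWithinAt)
    (fun s _ => (hderiv s).differentiableAt.differentiableWithinAt) fun s hs => ?_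
  rw [interior_Ici, mem_Ioi] at hs
  rw [(hderiv s).deriv]
  have hp : 0 ≤ x - 1 := by linarith
  refine mul_nonneg (by linarith) (sub_nonneg.2 ?_)
  calc (1 + s) ^ (x - 1) ≤ 2 ^ (x - 1) * s ^ (x - 1) :=
        one_add_rpow_le_two_rpow_mul_rpow hs.le hp
    _ ≤ c * s ^ (x - 1) := mul_le_mul_of_nonneg_right hc (rpow_nonneg (by linarith) _)

theorem lemma1_k_one_upper (t x : ℝ) (ht : 1 ≤ t) (hx : 1 ≤ x) :
    (1 + t) ^ x ≤ (1 / 2 : ℝ) ^ x + ((2 : ℝ) ^ x - (1 / 2 : ℝ) ^ x) * t ^ x := by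
  have hc := two_rpow_sub_one_le_two_rpow_sub_half_rpow (by linarith : (1 / 2 : ℝ) ≤ x)
  have h := monotoneOn_const_mul_rpow_sub_one_add_rpow hx hc self_mem_Ici ht ht
  norm_num only [one_rpow, mul_one] at h
  linarith
end

section
/- Let a₂, …, aₙ and c be nonnegative reals (n ≥ 3), r ≥ 1, k ≥ 1, 0 ≤ α ≤ r/2, and l = ((1+k)^(α/r) - (1/2)^(α/r))/k^(α/r). Suppose there exist nonnegative reals c₂ = c, c₃, …, cₙ with cᵢ^r ≥ aᵢ^r + c_{i+1}^r for i = 2, …, n-1 (where cₙ = aₙ), and suppose k·aᵢ^r ≤ c_{i+1}^r for i = 2, …, n-1. Then c^α ≥ (1/2)^(α/r)·(a₂^α + l·a₃^α + ⋯ + l^(n-3)·a_{n-1}^α) + l^(n-2)·aₙ^α. -/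
/-!
Put `t = α / r ≤ 1/2` and `l = ((1 + k)^t - (1/2)^t) / k^t`. The heart of the matter is that
`y ↦ ((1 + y)^t - (1/2)^t) / y^t` is nondecreasing on `[1, ∞)`, so that
`(1/2)^t + l x^t ≤ (1 + x)^t` for every `x ≥ k`. Applied with `x = c_{i+1}^r / a_i^r` this gives the
one-step bound `c_i^α ≥ (1/2)^t a_i^α + l c_{i+1}^α`, and unrolling it from `i = 2` to `i = n - 1`
yields the nested inequality. The monotonicity holds because the derivative has the sign of
`(1/2)^t - (1 + y)^(t - 1)`, and `(1 + y)^(t - 1) ≤ 2^(t - 1) ≤ 2^(-t)` as `t ≤ 1/2`.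
-/

open Real Set

lemma one_add_rpow_sub_one_le_half_rpow {t : ℝ} (ht : t ≤ 1 / 2) {y : ℝ} (hy : 1 ≤ y) :
    (1 + y) ^ (t - 1) ≤ (1 / 2 : ℝ) ^ t :=
  calc (1 + y) ^ (t - 1) ≤ (2 : ℝ) ^ (t - 1) :=
        rpow_le_rpow_of_nonpos two_pos (by linarith) (by linarith)
    _ ≤ (2 : ℝ) ^ (-t) := rpow_le_rpow_of_exponent_le one_le_two (by linarith)
    _ = (1 / 2 : ℝ) ^ t := by rw [rpow_neg zero_le_two, one_div, inv_rpow zero_le_two]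

lemma monotoneOn_one_add_rpow_sub_half_rpow_mul_rpow_neg {t : ℝ} (ht0 : 0 ≤ t) (ht : t ≤ 1 / 2) :
    MonotoneOn (fun y : ℝ => ((1 + y) ^ t - (1 / 2 : ℝ) ^ t) * y ^ (-t)) (Ici 1) := by
  have hderiv : ∀ y : ℝ, 0 < y →
      HasDerivAt (fun y : ℝ => ((1 + y) ^ t - (1 / 2 : ℝ) ^ t) * y ^ (-t))
        (t * y ^ (-t - 1) * ((1 / 2 : ℝ) ^ t - (1 + y) ^ (t - 1))) y := by
    intro y hy
    have hbase := ((hasDerivAt_id y).const_add 1).rpow_const (p := t)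
      (Or.inl (show (1 : ℝ) + y ≠ 0 by linarith))
    have hpow := hasDerivAt_rpow_const (x := y) (p := -t) (Or.inl hy.ne')
    refine ((hbase.sub_const ((1 / 2 : ℝ) ^ t)).mul hpow).congr_deriv ?_
    simp only [id, one_mul]
    rw [show y ^ (-t) = y ^ (-t - 1) * y by rw [← rpow_add_one hy.ne']; ring_nf,
      show (1 + y) ^ t = (1 + y) ^ (t - 1) * (1 + y) by rw [← rpow_add_one (by linarith)]; ring_nf]
    ring
  refine monotoneOn_of_hasDerivWithinAt_nonneg (convex_Ici 1)
    (fun y hy => (hderiv y (one_pos.trans_le hy)).continuousAt.continuousWithinAt)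
    (fun y hy => (hderiv y (one_pos.trans (interior_Ici.subset hy))).hasDerivWithinAt)
    fun y hy => ?_
  rw [interior_Ici, mem_Ioi] at hy
  exact mul_nonneg (mul_nonneg ht0 (rpow_nonneg (one_pos.trans hy).le _))
    (sub_nonneg.2 (one_add_rpow_sub_one_le_half_rpow ht hy.le))

lemma half_rpow_add_mul_rpow_le_one_add_rpow {t k x : ℝ} (ht0 : 0 ≤ t) (ht : t ≤ 1 / 2)
    (hk : 1 ≤ k) (hkx : k ≤ x) :
    (1 / 2 : ℝ) ^ t + ((1 + k) ^ t - (1 / 2 : ℝ) ^ t) / k ^ t * x ^ t ≤ (1 + x) ^ t := by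
  have hmono := monotoneOn_one_add_rpow_sub_half_rpow_mul_rpow_neg ht0 ht hk (hk.trans hkx) hkx
  have hxt : 0 < x ^ t := rpow_pos_of_pos (by linarith) t
  simp only [rpow_neg (zero_le_one.trans hk), rpow_neg (zero_le_one.trans (hk.trans hkx)),
    ← div_eq_mul_inv, le_div_iff₀ hxt] at hmono
  linarith

lemma half_rpow_mul_rpow_add_mul_rpow_le_add_rpow {t k u v : ℝ} (ht0 : 0 ≤ t) (ht : t ≤ 1 / 2)
    (hk : 1 ≤ k) (hu : 0 < u) (hkuv : k * u ≤ v) :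
    (1 / 2 : ℝ) ^ t * u ^ t + ((1 + k) ^ t - (1 / 2 : ℝ) ^ t) / k ^ t * v ^ t ≤ (u + v) ^ t := by
  have hkx : k ≤ v / u := (le_div_iff₀ hu).2 hkuv
  have hx0 : 0 ≤ v / u := by linarith
  have hv : u * (v / u) = v := mul_div_cancel₀ v hu.ne'
  calc (1 / 2 : ℝ) ^ t * u ^ t + ((1 + k) ^ t - (1 / 2 : ℝ) ^ t) / k ^ t * v ^ t
      = u ^ t * ((1 / 2 : ℝ) ^ t + ((1 + k) ^ t - (1 / 2 : ℝ) ^ t) / k ^ t * (v / u) ^ t) := by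
        rw [← hv, mul_rpow hu.le hx0, hv]; ring
    _ ≤ u ^ t * (1 + v / u) ^ t :=
        mul_le_mul_of_nonneg_left (half_rpow_add_mul_rpow_le_one_add_rpow ht0 ht hk hkx)
          (rpow_nonneg hu.le t)
    _ = (u + v) ^ t := by rw [← mul_rpow hu.le (by linarith), mul_add, mul_one, hv]

lemma half_rpow_mul_rpow_add_mul_rpow_le_rpow {r α k a b c : ℝ} (hr : 0 < r) (hα0 : 0 ≤ α)
    (hα : α ≤ r / 2) (hk : 1 ≤ k) (ha : 0 < a) (hb : 0 ≤ b) (hc : 0 ≤ c)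
    (hnest : a ^ r + b ^ r ≤ c ^ r) (hcond : k * a ^ r ≤ b ^ r) :
    (1 / 2 : ℝ) ^ (α / r) * a ^ α
      + ((1 + k) ^ (α / r) - (1 / 2 : ℝ) ^ (α / r)) / k ^ (α / r) * b ^ α ≤ c ^ α := by
  have ht0 : 0 ≤ α / r := div_nonneg hα0 hr.le
  have ht : α / r ≤ 1 / 2 := by rw [div_le_iff₀ hr]; linarith
  have hpow : ∀ x : ℝ, 0 ≤ x → x ^ α = (x ^ r) ^ (α / r) := fun x hx => by
    rw [← rpow_mul hx, mul_div_cancel₀ α hr.ne']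
  rw [hpow a ha.le, hpow b hb, hpow c hc]
  exact (half_rpow_mul_rpow_add_mul_rpow_le_add_rpow ht0 ht hk (rpow_pos_of_pos ha r) hcond).trans
    (rpow_le_rpow (by positivity) hnest ht0)

lemma mul_sum_pow_mul_add_pow_mul_le {x y : ℕ → ℝ} {h l : ℝ} (hl : 0 ≤ l) (d : ℕ)
    (hstep : ∀ i < d, h * y i + l * x (i + 1) ≤ x i) :
    h * ∑ i ∈ Finset.range d, l ^ i * y i + l ^ d * x d ≤ x 0 := by
  induction d with
  | zero => simp
  | succ d ih =>
    have hd := mul_le_mul_of_nonneg_left (hstep d d.lt_succ_self) (pow_nonneg hl d)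
    calc h * ∑ i ∈ Finset.range (d + 1), l ^ i * y i + l ^ (d + 1) * x (d + 1)
        = h * ∑ i ∈ Finset.range d, l ^ i * y i + l ^ d * (h * y d + l * x (d + 1)) := by
          rw [Finset.sum_range_succ, pow_succ]; ring
      _ ≤ h * ∑ i ∈ Finset.range d, l ^ i * y i + l ^ d * x d := by linarith
      _ ≤ x 0 := ih fun i hi => hstep i (hi.trans d.lt_succ_self)

theorem theorem3_case2 (n : ℕ) (hn : 3 ≤ n) (a c : ℕ → ℝ) (r k α : ℝ)
    (hr : 1 ≤ r) (hk : 1 ≤ k) (hα0 : 0 ≤ α) (hα : α ≤ r / 2)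
    (hapos : ∀ i, 2 ≤ i → i ≤ n → 0 < a i)
    (hcpos : ∀ i, 2 ≤ i → i ≤ n → 0 ≤ c i)
    (hcn : c n = a n)
    (hnest : ∀ i, 2 ≤ i → i ≤ n - 1 → c i ^ r ≥ a i ^ r + c (i + 1) ^ r)
    (hcond : ∀ i, 2 ≤ i → i ≤ n - 1 → k * a i ^ r ≤ c (i + 1) ^ r) :
    c 2 ^ α ≥
      (1 / 2 : ℝ) ^ (α / r) *
        (∑ i ∈ Finset.Icc 2 (n - 1),
          (((1 + k) ^ (α / r) - (1 / 2 : ℝ) ^ (α / r)) / k ^ (α / r)) ^ (i - 2) * a i ^ α) +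
      (((1 + k) ^ (α / r) - (1 / 2 : ℝ) ^ (α / r)) / k ^ (α / r)) ^ (n - 2) * a n ^ α := by
  have hr0 : 0 < r := by linarith
  set l := ((1 + k) ^ (α / r) - (1 / 2 : ℝ) ^ (α / r)) / k ^ (α / r)
  have hl0 : 0 ≤ l := div_nonneg
    (sub_nonneg.2 (rpow_le_rpow (by norm_num) (by linarith) (div_nonneg hα0 hr0.le)))
    (rpow_nonneg (by linarith) _)
  have hunroll := mul_sum_pow_mul_add_pow_mul_le (x := fun i => c (2 + i) ^ α)
    (y := fun i => a (2 + i) ^ α) hl0 (n - 2) fun i hi =>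
      half_rpow_mul_rpow_add_mul_rpow_le_rpow hr0 hα0 hα hk (hapos _ (by omega) (by omega))
        (hcpos _ (by omega) (by omega)) (hcpos _ (by omega) (by omega))
        (hnest _ (by omega) (by omega)) (hcond _ (by omega) (by omega))
  have hsum : ∑ i ∈ Finset.Icc 2 (n - 1), l ^ (i - 2) * a i ^ α
      = ∑ i ∈ Finset.range (n - 2), l ^ i * a (2 + i) ^ α := by
    rw [Finset.Icc_sub_one_right_eq_Ico_of_not_isMin (not_isMin_of_lt hn),
      Finset.sum_Ico_eq_sum_range]
    simp only [Nat.add_sub_cancel_left]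
  rw [hsum]
  simpa only [show 2 + (n - 2) = n by omega, hcn, add_zero] using hunroll
end

section
/- Let a₂, …, aₙ and c be nonnegative reals (n ≥ 3), r ≥ 1, k ≥ 1, 0 ≤ α ≤ r/2, and l = ((1+k)^(α/r) - (1/2)^(α/r))/k^(α/r). Suppose there exist nonnegative reals c₂ = c, c₃, …, cₙ with cᵢ^r ≥ aᵢ^r + c_{i+1}^r for i = 2, …, n-1 (where cₙ = aₙ), and suppose aᵢ^r ≥ k·c_{i+1}^r for i = 2, …, n-1. Then c^α ≥ l·(a₂^α + (1/2)^(α/r)·a₃^α + ⋯ + (1/2)^((n-3)α/r)·a_{n-1}^α) + (1/2)^((n-2)α/r)·aₙ^α. -/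
/-!
Put `t = α / r ≤ 1 / 2`, `u = aᵢ ^ r`, `v = cᵢ₊₁ ^ r`. One link of the chain is the inequality
`(u + v) ^ t ≥ l u ^ t + (1 / 2) ^ t v ^ t` for `u ≥ k v`. The constant `l` is chosen so that
equality holds at `u = k v`, and `w ↦ (w + v) ^ t - l w ^ t` is nondecreasing on `[k v, ∞)`
because `l ≤ (k / (k + 1)) ^ (1 - t)`; this last bound amounts to `2 ^ t ≤ (1 + k) ^ (1 - t)`,
which is where `k ≥ 1` and `t ≤ 1 / 2` enter. Iterating the link along `c₂, c₃, …, cₙ = aₙ`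
gives the weighted sum.
-/

open Real Finset Set

namespace Real

/-- The constant `l` of the theorem, with `t = α / r`. -/
noncomputable def nestedCoeff (k t : ℝ) : ℝ := ((1 + k) ^ t - (1 / 2) ^ t) / k ^ t

variable {t k v L : ℝ}

lemma rpow_add_sub_mul_rpow_monotoneOn (ht0 : 0 ≤ t) (ht1 : t ≤ 1) (hk : 0 ≤ k) (hv : 0 ≤ v)
    (hL : L ≤ (k / (k + 1)) ^ (1 - t)) :
    MonotoneOn (fun w => (w + v) ^ t - L * w ^ t) (Ici (k * v)) := by
  have hkv : 0 ≤ k * v := mul_nonneg hk hv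
  refine monotoneOn_of_hasDerivWithinAt_nonneg (convex_Ici _)
    (f' := fun w => t * (w + v) ^ (t - 1) - L * (t * w ^ (t - 1))) ?_ ?_ ?_
  · exact ((continuousOn_id.add continuousOn_const).rpow_const fun _ _ => Or.inr ht0).sub
      (continuousOn_const.mul (continuousOn_id.rpow_const fun _ _ => Or.inr ht0))
  · rw [interior_Ici]
    intro w (hw : k * v < w)
    have hw0 : w ≠ 0 := (hkv.trans_lt hw).ne'
    have hwv : w + v ≠ 0 := (add_pos_of_pos_of_nonneg (hkv.trans_lt hw) hv).ne'
    exact ((((hasDerivAt_id w).add_const v).rpow_const (Or.inl hwv)).sub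
      ((hasDerivAt_rpow_const (Or.inl hw0)).const_mul L)).hasDerivWithinAt.congr_deriv
      (by simp)
  · rw [interior_Ici]
    intro w (hw : k * v < w)
    have hw0 : 0 < w := hkv.trans_lt hw
    have hwv : 0 < w + v := add_pos_of_pos_of_nonneg hw0 hv
    have hratio : k / (k + 1) ≤ w / (w + v) := by
      rw [div_le_div_iff₀ (by linarith) hwv]; nlinarith
    have key : L * w ^ (t - 1) ≤ (w + v) ^ (t - 1) :=
      calc L * w ^ (t - 1) ≤ (w / (w + v)) ^ (1 - t) * w ^ (t - 1) := by
            gcongr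
            exact hL.trans (rpow_le_rpow (by positivity) hratio (by linarith))
        _ = (w + v) ^ (t - 1) := by
            rw [div_rpow hw0.le hwv.le, div_mul_eq_mul_div, ← rpow_add hw0, sub_add_sub_cancel,
              sub_self, rpow_zero, one_div, ← rpow_neg hwv.le, neg_sub]
    have := mul_le_mul_of_nonneg_left key ht0
    linarith

lemma nestedCoeff_le_div_add_one_rpow (hk : 1 ≤ k) (ht : t ≤ 1 / 2) :
    nestedCoeff k t ≤ (k / (k + 1)) ^ (1 - t) := by
  have hk0 : 0 < k := by linarith
  have hk1 : 0 < 1 + k := by linarith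
  have two_le : (2 : ℝ) ^ t ≤ (1 + k) ^ (1 - t) :=
    calc (2 : ℝ) ^ t ≤ 2 ^ (1 - t) := rpow_le_rpow_of_exponent_le one_le_two (by linarith)
      _ ≤ (1 + k) ^ (1 - t) := rpow_le_rpow zero_le_two (by linarith) (by linarith)
  rw [nestedCoeff, div_le_iff₀ (rpow_pos_of_pos hk0 t), add_comm k, div_rpow hk0.le hk1.le,
    div_mul_eq_mul_div, ← rpow_add hk0, sub_add_cancel, rpow_one,
    le_div_iff₀ (rpow_pos_of_pos hk1 _), sub_mul, ← rpow_add hk1, add_sub_cancel, rpow_one,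
    one_div, inv_rpow zero_le_two, inv_mul_eq_div]
  have := (one_le_div (rpow_pos_of_pos two_pos t)).2 two_le
  linarith

lemma nestedCoeff_mul_rpow_add_half_rpow_le (ht0 : 0 ≤ t) (ht : t ≤ 1 / 2) (hk : 1 ≤ k)
    (hv : 0 ≤ v) {u : ℝ} (hu : k * v ≤ u) :
    nestedCoeff k t * u ^ t + (1 / 2) ^ t * v ^ t ≤ (u + v) ^ t := by
  have hk0 : 0 < k := by linarith
  have hmono := rpow_add_sub_mul_rpow_monotoneOn ht0 (by linarith) hk0.le hv
    (nestedCoeff_le_div_add_one_rpow hk ht) Set.self_mem_Ici hu hu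
  have hleft : (k * v + v) ^ t - nestedCoeff k t * (k * v) ^ t = (1 / 2) ^ t * v ^ t := by
    rw [nestedCoeff, show k * v + v = (1 + k) * v by ring, mul_rpow (by linarith) hv,
      mul_rpow hk0.le hv]
    field_simp [(rpow_pos_of_pos hk0 t).ne']
    ring
  simp only [hleft] at hmono
  linarith

lemma nestedCoeff_mul_rpow_add_half_rpow_le_of_rpow_add_le {r α x y z : ℝ} (hr : 0 < r)
    (hα0 : 0 ≤ α) (hα : α ≤ r / 2) (hk : 1 ≤ k) (hx : 0 ≤ x) (hy : 0 ≤ y) (hz : 0 ≤ z)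
    (hxyz : x ^ r + y ^ r ≤ z ^ r) (hxy : k * y ^ r ≤ x ^ r) :
    nestedCoeff k (α / r) * x ^ α + (1 / 2) ^ (α / r) * y ^ α ≤ z ^ α := by
  have hpow : ∀ {w : ℝ}, 0 ≤ w → (w ^ r) ^ (α / r) = w ^ α := fun hw => by
    rw [← rpow_mul hw, mul_div_cancel₀ α hr.ne']
  rw [← hpow hx, ← hpow hy, ← hpow hz]
  exact (nestedCoeff_mul_rpow_add_half_rpow_le (div_nonneg hα0 hr.le)
    ((div_le_iff₀ hr).2 (by linarith)) hk (rpow_nonneg hy r) hxy).trans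
    (rpow_le_rpow (by positivity) hxyz (div_nonneg hα0 hr.le))

end Real

lemma le_sum_pow_mul_add_pow_mul_of_le {b f : ℕ → ℝ} {h : ℝ} (hh : 0 ≤ h) (N : ℕ)
    (hb : ∀ i < N, f i + h * b (i + 1) ≤ b i) :
    ∑ i ∈ range N, h ^ i * f i + h ^ N * b N ≤ b 0 := by
  induction N with
  | zero => simp
  | succ N ih =>
    calc ∑ i ∈ range (N + 1), h ^ i * f i + h ^ (N + 1) * b (N + 1)
        = ∑ i ∈ range N, h ^ i * f i + h ^ N * (f N + h * b (N + 1)) := by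
          rw [sum_range_succ]; ring
      _ ≤ ∑ i ∈ range N, h ^ i * f i + h ^ N * b N := by
          gcongr
          exact hb N N.lt_succ_self
      _ ≤ b 0 := ih fun i hi => hb i (hi.trans N.lt_succ_self)

theorem theorem3_case3_general (n : ℕ) (hn : 3 ≤ n) (a c : ℕ → ℝ) (r k α : ℝ)
    (hr : 1 ≤ r) (hk : 1 ≤ k) (hα0 : 0 ≤ α) (hα : α ≤ r / 2)
    (hapos : ∀ i, 2 ≤ i → i ≤ n → 0 ≤ a i)
    (hcnonneg : ∀ i, 2 ≤ i → i ≤ n → 0 ≤ c i)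
    (hcn : c n = a n)
    (hnest : ∀ i, 2 ≤ i → i ≤ n - 1 → c i ^ r ≥ a i ^ r + c (i + 1) ^ r)
    (hcond : ∀ i, 2 ≤ i → i ≤ n - 1 → a i ^ r ≥ k * c (i + 1) ^ r) :
    c 2 ^ α ≥
      (((1 + k) ^ (α / r) - (1 / 2 : ℝ) ^ (α / r)) / k ^ (α / r)) *
        (∑ i ∈ Finset.Icc 2 (n - 1), (1 / 2 : ℝ) ^ ((i - 2 : ℕ) * α / r) * a i ^ α) +
      (1 / 2 : ℝ) ^ ((n - 2 : ℕ) * α / r) * a n ^ α := by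
  show c 2 ^ α ≥ nestedCoeff k (α / r) * _ + _
  have hr0 : 0 < r := by linarith
  have step : ∀ i < n - 2,
      nestedCoeff k (α / r) * a (i + 2) ^ α + (1 / 2) ^ (α / r) * c (i + 2 + 1) ^ α
        ≤ c (i + 2) ^ α :=
    fun i hi => nestedCoeff_mul_rpow_add_half_rpow_le_of_rpow_add_le hr0 hα0 hα hk
      (hapos _ (by omega) (by omega)) (hcnonneg _ (by omega) (by omega))
      (hcnonneg _ (by omega) (by omega)) (hnest _ (by omega) (by omega))
      (hcond _ (by omega) (by omega))
  have hhalf : ∀ j : ℕ, (1 / 2 : ℝ) ^ ((j : ℝ) * α / r) = ((1 / 2 : ℝ) ^ (α / r)) ^ j :=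
    fun j => by
    rw [mul_div_assoc, mul_comm, rpow_mul_natCast (by norm_num)]
  have hsum : ∑ i ∈ Icc 2 (n - 1), (1 / 2 : ℝ) ^ ((i - 2 : ℕ) * α / r) * a i ^ α
      = ∑ i ∈ range (n - 2), ((1 / 2 : ℝ) ^ (α / r)) ^ i * a (i + 2) ^ α := by
    rw [← Finset.Ico_add_one_right_eq_Icc, Nat.sub_add_cancel (by omega), sum_Ico_eq_sum_range]
    refine sum_congr rfl fun i _ => ?_
    rw [add_comm 2 i, Nat.add_sub_cancel, hhalf]
  have hchain := le_sum_pow_mul_add_pow_mul_of_le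
    (f := fun i => nestedCoeff k (α / r) * a (i + 2) ^ α) (b := fun i => c (i + 2) ^ α)
    (by positivity) (n - 2) step
  rw [Nat.sub_add_cancel (by omega), hcn] at hchain
  rw [hsum, hhalf, mul_sum]
  convert hchain using 2
  exact sum_congr rfl fun i _ => mul_left_comm _ _ _

theorem theorem3_case3 (n : ℕ) (hn : 3 ≤ n) (a c : ℕ → ℝ) (r k α : ℝ)
    (hr : 1 ≤ r) (hk : 1 ≤ k) (hα0 : 0 ≤ α) (hα : α ≤ r / 2)
    (hapos : ∀ i, 2 ≤ i → i ≤ n → 0 ≤ a i)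
    (hcpos : ∀ i, 3 ≤ i → i ≤ n → 0 < c i)
    (hcnonneg : ∀ i, 2 ≤ i → i ≤ n → 0 ≤ c i)
    (hcn : c n = a n)
    (hnest : ∀ i, 2 ≤ i → i ≤ n - 1 → c i ^ r ≥ a i ^ r + c (i + 1) ^ r)
    (hcond : ∀ i, 2 ≤ i → i ≤ n - 1 → a i ^ r ≥ k * c (i + 1) ^ r) :
    c 2 ^ α ≥
      (((1 + k) ^ (α / r) - (1 / 2 : ℝ) ^ (α / r)) / k ^ (α / r)) *
        (∑ i ∈ Finset.Icc 2 (n - 1), (1 / 2 : ℝ) ^ ((i - 2 : ℕ) * α / r) * a i ^ α) +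
      (1 / 2 : ℝ) ^ ((n - 2 : ℕ) * α / r) * a n ^ α :=
  theorem3_case3_general n hn a c r k α hr hk hα0 hα hapos hcnonneg hcn hnest hcond
end

section
/- Let a₂, …, aₙ and c be nonnegative reals (n ≥ 3), 0 < s, β ≥ max{1,s}, k ≥ 1, and l = ((1+k)^(β/s) - (1/2)^(β/s))/k^(β/s). Suppose c^s ≤ a₂^s + ⋯ + aₙ^s, and suppose k·aᵢ^s ≤ a_{i+1}^s + ⋯ + aₙ^s for i = 2, …, n-1, with aᵢ > 0 for all i. Then c^β ≤ (1/2)^(β/s)·(a₂^β + l·a₃^β + ⋯ + l^(n-3)·a_{n-1}^β) + l^(n-2)·aₙ^β. -/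
/-!
Put `t = β / s ≥ 1` and `xᵢ = aᵢ ^ s`, so that `c ^ β ≤ (x₂ + ⋯ + xₙ) ^ t`. Convexity of
`u ↦ u ^ t` makes its increments `(u + T) ^ t - u ^ t` nondecreasing in `u`; comparing `u = A`
with `u = T / k ≥ A` gives `(A + T) ^ t ≤ (1/2) ^ t A ^ t + l T ^ t` whenever `k A ≤ T`.
Peeling off `x₂, x₃, …` one at a time against the tail sums then produces the weights
`(1/2) ^ t l ^ (i - 2)`, and the last tail is `xₙ` itself.
-/

open Finset

theorem ConvexOn.map_add_sub_map_le {𝕜 : Type*} [Field 𝕜] [LinearOrder 𝕜] [IsStrictOrderedRing 𝕜]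
    {s : Set 𝕜} {f : 𝕜 → 𝕜} (hf : ConvexOn 𝕜 s f) {x y d : 𝕜} (hx : x ∈ s) (hyd : y + d ∈ s)
    (hxy : x ≤ y) (hd : 0 ≤ d) : f (x + d) - f x ≤ f (y + d) - f y := by
  rcases (show x ≤ y + d by linarith).eq_or_lt with hxyd | hxyd
  · obtain rfl : d = 0 := by linarith
    simp
  -- `x + d` and `y` are the two convex combinations of `x` and `y + d` with swapped weights.
  set μ := (y - x) / (y + d - x)
  have hpos : 0 < y + d - x := by linarith
  have hμ0 : 0 ≤ μ := div_nonneg (by linarith) hpos.le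
  have hμ1 : μ ≤ 1 := (div_le_one hpos).mpr (by linarith)
  have hμd : μ * (y + d - x) = y - x := div_mul_cancel₀ _ hpos.ne'
  have h₁ := hf.2 hx hyd hμ0 (sub_nonneg.mpr hμ1) (add_sub_cancel μ 1)
  have h₂ := hf.2 hx hyd (sub_nonneg.mpr hμ1) hμ0 (sub_add_cancel 1 μ)
  simp only [smul_eq_mul] at h₁ h₂
  rw [show μ * x + (1 - μ) * (y + d) = x + d by linear_combination -hμd] at h₁
  rw [show (1 - μ) * x + μ * (y + d) = y by linear_combination hμd] at h₂
  linarith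

/-- The constant `l` of the statement, with `t = β / s`. -/
noncomputable def polygamyFactor (k t : ℝ) : ℝ :=
  ((1 + k) ^ t - (1 / 2 : ℝ) ^ t) / k ^ t

theorem polygamyFactor_nonneg {k t : ℝ} (hk : 0 ≤ k) (ht : 0 ≤ t) : 0 ≤ polygamyFactor k t :=
  div_nonneg (sub_nonneg.mpr (Real.rpow_le_rpow (by norm_num) (by linarith) ht))
    (Real.rpow_nonneg hk t)

theorem rpow_add_le_half_rpow_add_polygamyFactor_mul {k t A T : ℝ} (ht : 1 ≤ t) (hk : 0 < k)
    (hA : 0 ≤ A) (hAT : k * A ≤ T) :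
    (A + T) ^ t ≤ (1 / 2 : ℝ) ^ t * A ^ t + polygamyFactor k t * T ^ t := by
  have hT : 0 ≤ T := le_trans (mul_nonneg hk.le hA) hAT
  have hAB : A ≤ T / k := (le_div_iff₀ hk).mpr (by linarith)
  have hincr := (convexOn_rpow ht).map_add_sub_map_le hA (by simp; positivity) hAB hT
  have hBT : (T / k + T) ^ t = (1 + k) ^ t * (T ^ t / k ^ t) := by
    rw [show T / k + T = (1 + k) * (T / k) by field_simp,
      Real.mul_rpow (by linarith) (div_nonneg hT hk.le), Real.div_rpow hT hk.le]
  have hB : (T / k) ^ t = T ^ t / k ^ t := Real.div_rpow hT hk.le t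
  have hhalf : (1 / 2 : ℝ) ^ t ≤ 1 := Real.rpow_le_one (by norm_num) (by norm_num) (by linarith)
  have hpow : A ^ t ≤ T ^ t / k ^ t := hB ▸ Real.rpow_le_rpow hA hAB (by linarith)
  rw [hBT, hB] at hincr
  have hfactor : polygamyFactor k t * T ^ t
      = (1 + k) ^ t * (T ^ t / k ^ t) - (1 / 2 : ℝ) ^ t * (T ^ t / k ^ t) := by
    unfold polygamyFactor; ring
  nlinarith [mul_nonneg (sub_nonneg.mpr hhalf) (sub_nonneg.mpr hpow)]

theorem rpow_sum_Icc_le_add_tail {x : ℕ → ℝ} {k t : ℝ} {b n : ℕ} (ht : 1 ≤ t) (hk : 0 < k)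
    (hx : ∀ i, b ≤ i → i < n → 0 ≤ x i)
    (htail : ∀ i, b ≤ i → i < n → k * x i ≤ ∑ j ∈ Icc (i + 1) n, x j)
    {m : ℕ} (hbm : b ≤ m) (hmn : m ≤ n) :
    (∑ j ∈ Icc b n, x j) ^ t ≤
      (1 / 2 : ℝ) ^ t * ∑ i ∈ Ico b m, polygamyFactor k t ^ (i - b) * x i ^ t +
        polygamyFactor k t ^ (m - b) * (∑ j ∈ Icc m n, x j) ^ t := by
  set l := polygamyFactor k t
  induction m, hbm using Nat.le_induction with
  | base => simp
  | succ m hbm ih =>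
    have hsplit : ∑ j ∈ Icc m n, x j = x m + ∑ j ∈ Icc (m + 1) n, x j := by
      rw [Icc_eq_cons_Ioc (by omega), sum_cons, Icc_add_one_left_eq_Ioc]
    have hstep := rpow_add_le_half_rpow_add_polygamyFactor_mul ht hk (hx m hbm (by omega))
      (htail m hbm (by omega))
    have hl : 0 ≤ l ^ (m - b) := pow_nonneg (polygamyFactor_nonneg hk.le (by linarith)) _
    calc (∑ j ∈ Icc b n, x j) ^ t
        ≤ (1 / 2 : ℝ) ^ t * ∑ i ∈ Ico b m, l ^ (i - b) * x i ^ t +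
            l ^ (m - b) * (x m + ∑ j ∈ Icc (m + 1) n, x j) ^ t := hsplit ▸ ih (by omega)
      _ ≤ (1 / 2 : ℝ) ^ t * ∑ i ∈ Ico b m, l ^ (i - b) * x i ^ t +
            l ^ (m - b) * ((1 / 2 : ℝ) ^ t * x m ^ t + l * (∑ j ∈ Icc (m + 1) n, x j) ^ t) := by
        gcongr
      _ = (1 / 2 : ℝ) ^ t * ∑ i ∈ Ico b (m + 1), l ^ (i - b) * x i ^ t +
            l ^ (m + 1 - b) * (∑ j ∈ Icc (m + 1) n, x j) ^ t := by
        rw [sum_Ico_succ_top hbm, Nat.sub_add_comm hbm, pow_succ]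
        ring

theorem theorem6_case2 (n : ℕ) (hn : 3 ≤ n) (a : ℕ → ℝ) (c s k β : ℝ)
    (hs : 0 < s) (hk : 1 ≤ k) (hβ : max 1 s ≤ β)
    (hc : 0 ≤ c)
    (hapos : ∀ i, 2 ≤ i → i ≤ n → 0 < a i)
    (hcs : c ^ s ≤ ∑ i ∈ Finset.Icc 2 n, a i ^ s)
    (hcond : ∀ i, 2 ≤ i → i ≤ n - 1 →
      k * a i ^ s ≤ ∑ j ∈ Finset.Icc (i + 1) n, a j ^ s) :
    c ^ β ≤
      (1 / 2 : ℝ) ^ (β / s) *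
        (∑ i ∈ Finset.Icc 2 (n - 1),
          (((1 + k) ^ (β / s) - (1 / 2 : ℝ) ^ (β / s)) / k ^ (β / s)) ^ (i - 2) * a i ^ β) +
      (((1 + k) ^ (β / s) - (1 / 2 : ℝ) ^ (β / s)) / k ^ (β / s)) ^ (n - 2) * a n ^ β := by
  set t := β / s
  have ht : 1 ≤ t := (one_le_div hs).mpr (le_of_max_le_right hβ)
  have hpow : ∀ u : ℝ, 0 ≤ u → (u ^ s) ^ t = u ^ β := fun u hu => by
    rw [← Real.rpow_mul hu, mul_div_cancel₀ β hs.ne']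
  have hbound := rpow_sum_Icc_le_add_tail (x := fun i => a i ^ s) ht (by linarith)
    (fun i h2 hi => (Real.rpow_pos_of_pos (hapos i h2 hi.le) s).le)
    (fun i h2 hi => hcond i h2 (by omega)) (by omega : 2 ≤ n) le_rfl
  have hIcc : Icc 2 (n - 1) = Ico 2 n := by ext; simp only [mem_Icc, mem_Ico]; omega
  calc c ^ β = (c ^ s) ^ t := (hpow c hc).symm
    _ ≤ (∑ i ∈ Icc 2 n, a i ^ s) ^ t := Real.rpow_le_rpow (Real.rpow_nonneg hc s) hcs (by linarith)
    _ ≤ _ := hbound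
    _ = _ := by
      rw [Icc_self, sum_singleton, hpow _ (hapos n (by omega) le_rfl).le, hIcc]
      congr 2
      refine sum_congr rfl fun i hi => ?_
      rw [hpow _ (hapos i (mem_Ico.1 hi).1 (mem_Ico.1 hi).2.le).le]
      rfl
end

section
/- For real numbers x, y with 0 < x and 0 < y, and any k ≥ 1 and 0 ≤ u ≤ 1/2 such that y ≥ k·x: (x + y)^u ≥ (1/2)^u·x^u + ((1+k)^u - (1/2)^u)/k^u·y^u, and moreover ((1/2)^u − 1)·x^u + (1 − (1/2)^u)/k^u·y^u ≥ 0, i.e. the right-hand side is at least x^u + ((1+k)^u − 1)/k^u·y^u. -/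
open Real

lemma aux_key (a b k u : ℝ) (ha : 0 < a) (hab : a ≤ b) (hk : 1 ≤ k)
    (hu0 : 0 ≤ u) (hu : u ≤ 1 / 2) :
    (1 + k) ^ u * b ^ u - (1 / 2 : ℝ) ^ u * b ^ u ≤
      (a + k * b) ^ u - (1 / 2 : ℝ) ^ u * a ^ u := by
  have hb : 0 < b := ha.trans_le hab
  have hk0 : 0 < k := lt_of_lt_of_le one_pos hk
  set f : ℝ → ℝ := fun t => (t + k * b) ^ u - (1 / 2 : ℝ) ^ u * t ^ u with hf
  -- derivative
  have hderiv : ∀ t ∈ Set.Ioo a b,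
      HasDerivAt f (1 * u * (t + k * b) ^ (u - 1) -
        (1 / 2 : ℝ) ^ u * (1 * u * t ^ (u - 1))) t := by
    intro t ht
    have ht0 : 0 < t := ha.trans ht.1
    have h1 : 0 < t + k * b := by positivity
    have d1 : HasDerivAt (fun t : ℝ => (t + k * b) ^ u)
        (1 * u * (t + k * b) ^ (u - 1)) t :=
      ((hasDerivAt_id t).add_const (k * b)).rpow_const (Or.inl h1.ne')
    have d2 : HasDerivAt (fun t : ℝ => (1 / 2 : ℝ) ^ u * t ^ u)
        ((1 / 2 : ℝ) ^ u * (1 * u * t ^ (u - 1))) t :=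
      ((hasDerivAt_id t).rpow_const (Or.inl ht0.ne')).const_mul _
    exact d1.sub d2
  have hderiv_nonpos : ∀ t ∈ Set.Ioo a b,
      1 * u * (t + k * b) ^ (u - 1) -
        (1 / 2 : ℝ) ^ u * (1 * u * t ^ (u - 1)) ≤ 0 := by
    intro t ht
    have ht0 : 0 < t := ha.trans ht.1
    have h2t : 2 * t ≤ t + k * b := by nlinarith [ht.2.le]
    have h1 : (t + k * b) ^ (u - 1) ≤ (2 * t) ^ (u - 1) :=
      Real.rpow_le_rpow_of_nonpos (by positivity) h2t (by linarith)
    have h2 : (2 * t) ^ (u - 1) = 2 ^ (u - 1) * t ^ (u - 1) :=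
      Real.mul_rpow (by norm_num) ht0.le
    have h3 : (2 : ℝ) ^ (u - 1) ≤ (2 : ℝ) ^ (-u) :=
      Real.rpow_le_rpow_of_exponent_le one_le_two (by linarith)
    have h4 : ((1 / 2 : ℝ)) ^ u = (2 : ℝ) ^ (-u) := by
      rw [Real.rpow_neg (by norm_num : (0:ℝ) ≤ 2), ← Real.inv_rpow (by norm_num : (0:ℝ) ≤ 2)]
      norm_num
    have h5 : (t + k * b) ^ (u - 1) ≤ (1 / 2 : ℝ) ^ u * t ^ (u - 1) := by
      rw [h4]
      calc (t + k * b) ^ (u - 1) ≤ 2 ^ (u - 1) * t ^ (u - 1) := h1.trans_eq h2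
        _ ≤ (2 : ℝ) ^ (-u) * t ^ (u - 1) := by
            have := Real.rpow_nonneg ht0.le (u - 1)
            nlinarith
    have htu : (0:ℝ) ≤ t ^ (u - 1) := Real.rpow_nonneg ht0.le _
    nlinarith [Real.rpow_nonneg (show (0:ℝ) ≤ t + k * b by positivity) (u - 1)]
  have hcont : ContinuousOn f (Set.Icc a b) := by
    intro t ht
    have ht0 : 0 < t := lt_of_lt_of_le ha ht.1
    have h1 : 0 < t + k * b := by positivity
    have d1 : HasDerivAt (fun t : ℝ => (t + k * b) ^ u)
        (1 * u * (t + k * b) ^ (u - 1)) t :=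
      ((hasDerivAt_id t).add_const (k * b)).rpow_const (Or.inl h1.ne')
    have d2 : HasDerivAt (fun t : ℝ => (1 / 2 : ℝ) ^ u * t ^ u)
        ((1 / 2 : ℝ) ^ u * (1 * u * t ^ (u - 1))) t :=
      ((hasDerivAt_id t).rpow_const (Or.inl ht0.ne')).const_mul _
    exact ((d1.sub d2).continuousAt).continuousWithinAt
  have hanti : AntitoneOn f (Set.Icc a b) := by
    apply antitoneOn_of_hasDerivWithinAt_nonpos (convex_Icc a b) hcont
      (f' := fun t => 1 * u * (t + k * b) ^ (u - 1) -
        (1 / 2 : ℝ) ^ u * (1 * u * t ^ (u - 1)))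
    · intro t ht
      rw [interior_Icc] at ht
      exact (hderiv t ht).hasDerivWithinAt
    · intro t ht
      rw [interior_Icc] at ht
      exact hderiv_nonpos t ht
  have hfb : f b ≤ f a :=
    hanti (Set.left_mem_Icc.2 hab) (Set.right_mem_Icc.2 hab) hab
  have hfbe : f b = (1 + k) ^ u * b ^ u - (1 / 2 : ℝ) ^ u * b ^ u := by
    have : b + k * b = (1 + k) * b := by ring
    simp only [hf, this, Real.mul_rpow (by positivity : (0:ℝ) ≤ 1 + k) hb.le]
  rw [hfbe] at hfb
  exact hfb

theorem remark2_tighter (x y k u : ℝ) (hx : 0 < x) (hy : 0 < y)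
    (hk : 1 ≤ k) (hu0 : 0 ≤ u) (hu : u ≤ 1 / 2) (hyx : k * x ≤ y) :
    (x + y) ^ u ≥ (1 / 2 : ℝ) ^ u * x ^ u +
      ((1 + k) ^ u - (1 / 2 : ℝ) ^ u) / k ^ u * y ^ u ∧
    ((1 / 2 : ℝ) ^ u - 1) * x ^ u + (1 - (1 / 2 : ℝ) ^ u) / k ^ u * y ^ u ≥ 0 := by
  have hk0 : 0 < k := lt_of_lt_of_le one_pos hk
  have hku : (0:ℝ) < k ^ u := Real.rpow_pos_of_pos hk0 u
  have hdiv : (y / k) ^ u = y ^ u / k ^ u := Real.div_rpow hy.le hk0.le u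
  constructor
  · have hab : x ≤ y / k := (le_div_iff₀ hk0).2 (by linarith [hyx])
    have key := aux_key x (y / k) k u hx hab hk hu0 hu
    have hky : k * (y / k) = y := by field_simp
    rw [hky, hdiv] at key
    have h12 : (0:ℝ) ≤ (1 / 2 : ℝ) ^ u := Real.rpow_nonneg (by norm_num) u
    calc (1 / 2 : ℝ) ^ u * x ^ u + ((1 + k) ^ u - (1 / 2 : ℝ) ^ u) / k ^ u * y ^ u
        = (1 / 2 : ℝ) ^ u * x ^ u +
          ((1 + k) ^ u * (y ^ u / k ^ u) - (1 / 2 : ℝ) ^ u * (y ^ u / k ^ u)) := by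
          field_simp
      _ ≤ (x + y) ^ u := by linarith
  · have h12 : (1 / 2 : ℝ) ^ u ≤ 1 :=
      Real.rpow_le_one (by norm_num) (by norm_num) hu0
    have hxy : x ^ u ≤ y ^ u / k ^ u := by
      rw [← hdiv]
      exact Real.rpow_le_rpow hx.le ((le_div_iff₀ hk0).2 (by linarith [hyx])) hu0
    have : ((1 / 2 : ℝ) ^ u - 1) * x ^ u + (1 - (1 / 2 : ℝ) ^ u) / k ^ u * y ^ u
        = (1 - (1 / 2 : ℝ) ^ u) * (y ^ u / k ^ u - x ^ u) := by ring
    rw [ge_iff_le, this]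
    have h1 : (0:ℝ) ≤ 1 - (1 / 2 : ℝ) ^ u := by linarith
    nlinarith
end
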